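/- arXiv:math/9606229 — 2 statements merged into one kernel-verified Lean document; each statement's English description precedes it below -/
import Mathlib

section
/- In the scale context, if J is θ-complete, ζ ≤ θ is a limit ordinal, and λ = κ^{+ζ}, then S^bd = ∅. -/
open Cardinal Set

noncomputable section

/-- The `β`-th iterated cardinal successor of `χ`. -/
noncomputable def succIter (χ : Cardinal.{0}) (β : Ordinal.{0}) : Cardinal :=
  Ordinal.limitRecOn β χ (fun _ ih => Order.succ ih)
    (fun β _ ih => ⨆ γ : Iio β, ih γ.1 γ.2)

/-- `J` is a proper ideal on `{i : i < κ}`. -/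
structure IsIdealOn (κ : Ordinal.{0}) (J : Set (Set Ordinal)) : Prop where
  subset_mem : ∀ s ∈ J, s ⊆ Iio κ
  empty_mem : ∅ ∈ J
  mono : ∀ s ∈ J, ∀ t ⊆ s, t ∈ J
  union_mem : ∀ s ∈ J, ∀ t ∈ J, s ∪ t ∈ J
  proper : Iio κ ∉ J

/-- The ideal of bounded subsets of `κ`. -/
def boundedIdeal (κ : Ordinal.{0}) : Set (Set Ordinal) := {s | ∃ j < κ, s ⊆ Iio j}

/-- `J` is `θ`-complete: closed under unions of fewer than `θ` of its members. -/
def IsCompleteIdeal (θ : Cardinal.{0}) (J : Set (Set Ordinal)) : Prop :=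
  ∀ S : Set (Set Ordinal), S ⊆ J → #S < Cardinal.lift.{1,0} θ → ⋃₀ S ∈ J

/-- `f <_J g` : `{i < κ : f i ≥ g i} ∈ J`. -/
def ltMod (κ : Ordinal.{0}) (J : Set (Set Ordinal)) (f g : Ordinal → Ordinal) : Prop :=
  {i | i < κ ∧ g i ≤ f i} ∈ J

/-- `h` is a `<_J`-exact upper bound of `⟨f α : α < δ⟩`. -/
def IsEub (κ : Ordinal.{0}) (J : Set (Set Ordinal)) (δ : Ordinal.{0})
    (f : Ordinal → Ordinal → Ordinal) (h : Ordinal → Ordinal) : Prop :=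
  (∀ α < δ, ltMod κ J (f α) h) ∧
    ∀ g : Ordinal → Ordinal, ltMod κ J g h → ∃ α < δ, ltMod κ J g (f α)

/-- `D` is an ultrafilter on `{i : i < κ}`. -/
structure IsUltrafilterOn (κ : Ordinal.{0}) (D : Set (Set Ordinal)) : Prop where
  subset_mem : ∀ s ∈ D, s ⊆ Iio κ
  inter_mem : ∀ s ∈ D, ∀ t ∈ D, s ∩ t ∈ D
  superset_mem : ∀ s ∈ D, ∀ t, t ⊆ Iio κ → s ⊆ t → t ∈ D
  empty_not_mem : ∅ ∉ D
  ultra : ∀ s, s ⊆ Iio κ → s ∈ D ∨ Iio κ \ s ∈ D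

/-- `f <_D g` : `{i < κ : f i < g i} ∈ D`. -/
def ltModD (κ : Ordinal.{0}) (D : Set (Set Ordinal)) (f g : Ordinal → Ordinal) : Prop :=
  {i | i < κ ∧ f i < g i} ∈ D

/-- `δ` is a good point for the sequence `f` (with respect to the ideal `J` on `κ`). -/
def IsGoodPt (κ : Ordinal.{0}) (J : Set (Set Ordinal)) (f : Ordinal → Ordinal → Ordinal)
    (δ : Ordinal.{0}) : Prop :=
  ∃ A : Set Ordinal, A ⊆ Iio δ ∧ (∀ β < δ, ∃ α ∈ A, β < α) ∧
    ∃ s : Ordinal → Set Ordinal, (∀ α ∈ A, s α ∈ J) ∧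
      ∀ i < κ, ∀ α ∈ A, ∀ β ∈ A, α < β → i ∉ s α → i ∉ s β → f α i < f β i

/-- `δ` is a weakly good point for `f`. -/
def IsWeaklyGoodPt (κ : Ordinal.{0}) (J : Set (Set Ordinal)) (f : Ordinal → Ordinal → Ordinal)
    (δ : Ordinal.{0}) : Prop :=
  ∃ t : Set Ordinal, t ⊆ Iio κ ∧ t ∉ J ∧
    ∃ A : Set Ordinal, A ⊆ Iio δ ∧ (∀ β < δ, ∃ α ∈ A, β < α) ∧
      ∃ s : Ordinal → Set Ordinal, (∀ α ∈ A, s α ∈ J) ∧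
        ∀ i ∈ t, ∀ α ∈ A, ∀ β ∈ A, α < β → i ∉ s α → i ∉ s β → f α i < f β i

/-- `δ` is a chaotic point for `f`. -/
def IsChaoticPt (κ : Ordinal.{0}) (J : Set (Set Ordinal)) (f : Ordinal → Ordinal → Ordinal)
    (δ : Ordinal.{0}) : Prop :=
  (∃ D : Set (Set Ordinal), IsUltrafilterOn κ D ∧ (∀ s ∈ J, s ∉ D) ∧
    ∃ a : Ordinal → Set Ordinal, (∀ i < κ, #(a i) ≤ Cardinal.lift.{1,0} κ.card) ∧
      ∀ α < δ, ∃ β, α < β ∧ β < δ ∧ ∃ g : Ordinal → Ordinal,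
        (∀ i < κ, g i ∈ a i) ∧ ltModD κ D (f α) g ∧ ltModD κ D g (f β)) ∨
  (∃ A : Set Ordinal, A ⊆ Iio δ ∧ (∀ β < δ, ∃ α ∈ A, β < α) ∧
    ∃ g : Ordinal → Ordinal, ∀ α ∈ A, ∀ β ∈ A, α < β →
      {i | i < κ ∧ f β i ≤ g i} \ {i | i < κ ∧ f α i ≤ g i} ∈ J ∧
      {i | i < κ ∧ f α i ≤ g i} \ {i | i < κ ∧ f β i ≤ g i} ∉ J)

/-- The set of good points `δ < λ⁺` with `κ < cf δ < λ`. -/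
def Sgd (κ lam : Cardinal.{0}) (J : Set (Set Ordinal)) (f : Ordinal → Ordinal → Ordinal) :
    Set Ordinal :=
  {δ | δ < (Order.succ lam).ord ∧ Order.IsSuccLimit δ ∧ κ < δ.cof ∧ δ.cof < lam ∧ IsGoodPt κ.ord J f δ}

/-- The set of bad points `δ < λ⁺` with `κ < cf δ < λ`. -/
def Sbd (κ lam : Cardinal.{0}) (J : Set (Set Ordinal)) (f : Ordinal → Ordinal → Ordinal) :
    Set Ordinal :=
  {δ | δ < (Order.succ lam).ord ∧ Order.IsSuccLimit δ ∧ κ < δ.cof ∧ δ.cof < lam ∧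
    (∃ h : Ordinal → Ordinal, IsEub κ.ord J δ f h ∧ {i | i < κ.ord ∧ (h i).cof ≤ κ} ∈ J) ∧
    ¬ IsGoodPt κ.ord J f δ}

/-- The set of chaotic points `δ < λ⁺` with `κ < cf δ < λ`. -/
def Sch (κ lam : Cardinal.{0}) (J : Set (Set Ordinal)) (f : Ordinal → Ordinal → Ordinal) :
    Set Ordinal :=
  {δ | δ < (Order.succ lam).ord ∧ Order.IsSuccLimit δ ∧ κ < δ.cof ∧ δ.cof < lam ∧ IsChaoticPt κ.ord J f δ}

/-- `C` is a club (closed unbounded) subset of `δ`. -/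
def IsClubIn (C : Set Ordinal) (δ : Ordinal.{0}) : Prop :=
  C ⊆ Iio δ ∧ (∀ α < δ, ∃ β ∈ C, α < β) ∧
    ∀ α < δ, 0 < α → (∀ β < α, ∃ γ ∈ C, β < γ ∧ γ < α) → α ∈ C

/-- `S` is stationary in `δ`. -/
def IsStationaryIn (S : Set Ordinal) (δ : Ordinal.{0}) : Prop :=
  ∀ C : Set Ordinal, IsClubIn C δ → (S ∩ C).Nonempty

/-- `(∏_{i<κ} θs i, <_J)` has true cofinality `σ`. -/
def HasTrueCofinality (κ : Ordinal.{0}) (J : Set (Set Ordinal)) (θs : Ordinal → Cardinal)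
    (σ : Cardinal.{0}) : Prop :=
  σ.IsRegular ∧ ∃ g : Ordinal → Ordinal → Ordinal,
    (∀ ξ < σ.ord, ∀ i < κ, g ξ i < (θs i).ord) ∧
    (∀ ξ < σ.ord, ∀ ξ' < σ.ord, ξ < ξ' → ltMod κ J (g ξ) (g ξ')) ∧
    ∀ h : Ordinal → Ordinal, (∀ i < κ, h i < (θs i).ord) → ∃ ξ < σ.ord, ltMod κ J h (g ξ)

/-- `S_{<θ}(X)` : the subsets of `X` of cardinality `< θ`. -/
def SetLt (θ : Cardinal.{0}) (X : Set Ordinal) : Set (Set Ordinal) :=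
  {a | a ⊆ X ∧ #a < Cardinal.lift.{1,0} θ}

/-- `C` is a club in `S_{<θ}(X)` : cofinal and closed under unions of increasing chains
of length `< θ`. -/
def IsClubInSetLt (θ : Cardinal.{0}) (X : Set Ordinal) (C : Set (Set Ordinal)) : Prop :=
  C ⊆ SetLt θ X ∧ (∀ a ∈ SetLt θ X, ∃ b ∈ C, a ⊆ b) ∧
    ∀ β : Ordinal, 0 < β → β < θ.ord → ∀ c : Ordinal → Set Ordinal,
      (∀ i < β, c i ∈ C) → (∀ i < β, ∀ j < β, i ≤ j → c i ⊆ c j) →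
      (⋃ i ∈ Iio β, c i) ∈ C

/-- `S` is stationary in `S_{<θ}(X)`. -/
def IsStationaryInSetLt (θ : Cardinal.{0}) (X : Set Ordinal) (S : Set (Set Ordinal)) : Prop :=
  ∀ C : Set (Set Ordinal), IsClubInSetLt θ X C → (S ∩ C).Nonempty

/-- `NPT(λ, θ)` : there is a family `⟨A i : i < λ⟩` of subsets of `λ`, each of cardinality
`≤ θ`, with no transversal, while every proper initial segment has a transversal. -/
def NPT (lam θ : Cardinal.{0}) : Prop :=
  ∃ A : Ordinal → Set Ordinal,
    (∀ i < lam.ord, A i ⊆ Iio lam.ord ∧ #(A i) ≤ Cardinal.lift.{1,0} θ) ∧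
    (¬ ∃ F : Ordinal → Ordinal, (∀ i < lam.ord, F i ∈ A i) ∧ InjOn F (Iio lam.ord)) ∧
    ∀ α < lam.ord, ∃ F : Ordinal → Ordinal, (∀ i < α, F i ∈ A i) ∧ InjOn F (Iio α)

end

/-!
Let `h` be a `<_J`-exact upper bound of `⟨f α : α < δ⟩` and `σ = cf δ`. On the coordinates where
`cf (h i) > σ`, the values of `f` along a cofinal `σ`-sequence in `δ` are bounded below `h i`, so
these coordinates form a `J`-set. For each regular `χ` with `κ < χ < σ` so do those with
`cf (h i) = χ`: fixing cofinal `χ`-sequences `e i` in the `h i`, some `f β` with `β < δ` lies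
`J`-almost everywhere above each `i ↦ e i ν`, while below `h` it is dominated by a single one of
them since `κ < χ`. As `λ = κ^{+ζ}`, fewer than `θ` cardinals lie strictly between `κ` and `σ`,
so `θ`-completeness gives `cf (h i) = σ` for `J`-almost all `i`. Then, with cofinal
`σ`-sequences `e i` in the `h i`, a recursion of length `σ` interleaves the `f α` with the
functions `i ↦ e i ν` and yields an unbounded subset of `δ` on which `f` is increasing
coordinatewise off `J`-sets, i.e. `δ` is good.
-/

open Ordinal Order

universe u

theorem iSup_Iio_lt_of_card_lt_cof {o a : Ordinal.{u}} (h : o.card < a.cof) {g : Iio o → Ordinal.{u}}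
    (hg : ∀ i, g i < a) : ⨆ i, g i < a := by
  refine Ordinal.lift_iSup_lt_of_lt_cof ?_ hg
  simpa [Cardinal.mk_Iio_ordinal, ← lift_cof, ← lift_card] using h

theorem exists_forall_of_upwardClosed {o a : Ordinal.{u}} (h : o.card < a.cof)
    {P : Ordinal → Ordinal → Prop} (hP : ∀ i < o, ∃ x < a, P i x)
    (hmono : ∀ i < o, ∀ x y, x ≤ y → y < a → P i x → P i y) :
    ∃ x < a, ∀ i < o, P i x := by
  choose x hxa hPx using fun i : Iio o => hP i.1 i.2
  have hsup := iSup_Iio_lt_of_card_lt_cof h hxa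
  exact ⟨_, hsup, fun i hi =>
    hmono i hi _ _ (Ordinal.le_iSup x ⟨i, hi⟩) hsup (hPx ⟨i, hi⟩)⟩

theorem exists_monotoneOn_cofinal (o : Ordinal.{u}) :
    ∃ g : Ordinal.{u} → Ordinal.{u}, (∀ ν < o.cof.ord, g ν < o) ∧
      MonotoneOn g (Iio o.cof.ord) ∧ ∀ x < o, ∃ ν < o.cof.ord, x ≤ g ν := by
  classical
  obtain ⟨s, hs⟩ := exists_isFundamentalSeq (o := o) rfl
  refine ⟨fun ν => if hν : ν < o.cof.ord then s ⟨ν, hν⟩ else 0, fun ν hν => ?_, ?_, ?_⟩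
  · simp only [dif_pos hν]; exact (s _).2
  · intro ν hν ν' hν' hle
    simp only [dif_pos (show ν < o.cof.ord from hν), dif_pos (show ν' < o.cof.ord from hν')]
    exact hs.strictMono.monotone (Subtype.mk_le_mk.2 hle)
  · intro x hx
    obtain ⟨_, ⟨⟨ν, hν⟩, rfl⟩, hle⟩ := hs.isCofinal_range ⟨x, hx⟩
    refine ⟨ν, hν, ?_⟩
    simp only [dif_pos (show ν < o.cof.ord from hν)]
    exact hle

theorem succIter_zero (χ : Cardinal) : succIter χ 0 = χ :=
  limitRecOn_zero _ _ _

theorem succIter_add_one (χ : Cardinal) (β : Ordinal) :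
    succIter χ (β + 1) = succ (succIter χ β) :=
  limitRecOn_add_one _ _ _ _

theorem succIter_limit (χ : Cardinal) {β : Ordinal} (hβ : IsSuccLimit β) :
    succIter χ β = ⨆ γ : Iio β, succIter χ γ :=
  limitRecOn_limit _ _ _ _ hβ

theorem exists_eq_succIter {χ c : Cardinal} {β : Ordinal} (hχ : χ ≤ c)
    (hc : c < succIter χ β) : ∃ ξ < β, c = succIter χ ξ := by
  induction β using limitRecOn with
  | zero => exact absurd hχ (by rwa [succIter_zero, ← not_le] at hc)
  | add_one β ih =>
    rw [succIter_add_one, lt_succ_iff] at hc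
    rcases hc.lt_or_eq with hlt | rfl
    · obtain ⟨ξ, hξ, rfl⟩ := ih hlt
      exact ⟨ξ, hξ.trans (lt_add_one β), rfl⟩
    · exact ⟨β, lt_add_one β, rfl⟩
  | limit β hβ ih =>
    rw [succIter_limit χ hβ] at hc
    obtain ⟨⟨γ, hγ⟩, hcγ⟩ := (lt_ciSup_iff' Cardinal.bddAbove_of_small).1 hc
    obtain ⟨ξ, hξ, rfl⟩ := ih γ hγ hcγ
    exact ⟨ξ, hξ.trans hγ, rfl⟩

theorem mk_Ico_lt_of_lt_succIter {χ c θ : Cardinal.{0}} {β : Ordinal} (hχ : χ ≤ c)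
    (hc : c < succIter χ β) (hβ : β ≤ θ.ord) : #(Ico χ c) < Cardinal.lift.{1} θ := by
  obtain ⟨ξ, hξβ, rfl⟩ := exists_eq_succIter hχ hc
  calc #(Ico χ (succIter χ ξ)) ≤ #(succIter χ '' Iio ξ) := mk_le_mk_of_subset fun c hc => by
        obtain ⟨ξ', hξ', rfl⟩ := exists_eq_succIter hc.1 hc.2
        exact ⟨ξ', hξ', rfl⟩
    _ ≤ #(Iio ξ) := mk_image_le
    _ = Cardinal.lift ξ.card := Cardinal.mk_Iio_ordinal ξ
    _ < Cardinal.lift θ := Cardinal.lift_lt.2 (lt_ord.1 (hξβ.trans_le hβ))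

theorem exists_strictMono_cofinal_interleaving {δ : Ordinal.{u}} (hδ : IsSuccLimit δ)
    (a ν : Ordinal → Ordinal) (ha : ∀ m < δ.cof.ord, a m < δ)
    (hν : ∀ x < δ, ν x < δ.cof.ord) :
    ∃ α M : Ordinal → Ordinal, StrictMono α ∧ (∀ β < δ, ∃ ε < δ.cof.ord, β < α ε) ∧
      (∀ ε < δ.cof.ord, α ε < δ ∧ M ε < δ.cof.ord) ∧ (∀ ε, a (M ε) < α ε) ∧
      ∀ ε' ε, ε' < ε → ν (α ε') ≤ M ε := by
  obtain ⟨c, hcδ, -, hc⟩ := exists_monotoneOn_cofinal δ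
  set α : Ordinal → Ordinal := wellFounded_lt.fix fun ε ih =>
    succ (max (⨆ ε' : Iio ε, ih ε'.1 ε'.2) (max (a (⨆ ε' : Iio ε, ν (ih ε'.1 ε'.2))) (c ε)))
  set M : Ordinal → Ordinal := fun ε => ⨆ ε' : Iio ε, ν (α ε')
  have hα : ∀ ε, α ε = succ (max (⨆ ε' : Iio ε, α ε') (max (a (M ε)) (c ε))) :=
    fun ε => wellFounded_lt.fix_eq _ ε
  have hbound : ∀ ε < δ.cof.ord, α ε < δ ∧ M ε < δ.cof.ord := by
    intro ε
    induction ε using WellFoundedLT.induction with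
    | ind ε ih =>
      intro hε
      have hcard : ε.card < δ.cof := Cardinal.lt_ord.1 hε
      have hM : M ε < δ.cof.ord := iSup_Iio_lt_of_card_lt_cof (by rwa [cof_ord_cof δ]) fun ε' =>
        hν _ (ih ε'.1 ε'.2 (ε'.2.trans hε)).1
      refine ⟨?_, hM⟩
      rw [hα]
      exact hδ.succ_lt (max_lt (iSup_Iio_lt_of_card_lt_cof hcard fun ε' =>
        (ih ε'.1 ε'.2 (ε'.2.trans hε)).1) (max_lt (ha _ hM) (hcδ ε hε)))
  refine ⟨α, M, fun ε' ε hlt => ?_, fun β hβ => ?_, hbound, fun ε => ?_,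
    fun ε' ε hlt => Ordinal.le_iSup (fun ε'' : Iio ε => ν (α ε'')) ⟨ε', hlt⟩⟩
  · rw [hα ε]
    exact lt_succ_of_le ((Ordinal.le_iSup (fun ε'' : Iio ε => α ε'') ⟨ε', hlt⟩).trans
      (le_max_left _ _))
  · obtain ⟨ε, hε, hle⟩ := hc β hβ
    refine ⟨ε, hε, hle.trans_lt ?_⟩
    rw [hα ε]
    exact lt_succ_of_le ((le_max_right _ _).trans (le_max_right _ _))
  · rw [hα ε]
    exact lt_succ_of_le ((le_max_left _ _).trans (le_max_right _ _))

theorem exists_lt_ord_forall_le_of_cof_eq {κ : Ordinal.{u}} {c : Cardinal.{u}}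
    (hκ : κ.card < c.ord.cof) {h g : Ordinal → Ordinal} {e : Ordinal → Ordinal → Ordinal}
    (he_mono : ∀ i, MonotoneOn (e i) (Iio (h i).cof.ord))
    (he_cof : ∀ i, ∀ x < h i, ∃ ν < (h i).cof.ord, x ≤ e i ν) :
    ∃ ν < c.ord, ∀ i < κ, (h i).cof = c → g i < h i → g i ≤ e i ν := by
  have hc : 0 < c.ord := cof_pos.1 (zero_le.trans_lt hκ)
  refine exists_forall_of_upwardClosed hκ (fun i _ => ?_) fun i _ x y hxy hy hx hci hgi => ?_
  · by_cases hi : (h i).cof = c ∧ g i < h i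
    · obtain ⟨ν, hν, hle⟩ := he_cof i (g i) hi.2
      exact ⟨ν, hi.1 ▸ hν, fun _ _ => hle⟩
    · exact ⟨0, hc, fun hci hgi => absurd ⟨hci, hgi⟩ hi⟩
  · refine (hx hci hgi).trans (he_mono i ?_ ?_ hxy) <;> rw [Set.mem_Iio, hci]
    exacts [hxy.trans_lt hy, hy]

section Eub

variable {κ δ : Ordinal.{0}} {J : Set (Set Ordinal)} {f : Ordinal → Ordinal → Ordinal}
  {h : Ordinal → Ordinal}

theorem IsIdealOn.mem_of_subset_union (hJ : IsIdealOn κ J) {s t u : Set Ordinal}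
    (hs : s ∈ J) (ht : t ∈ J) (hu : u ⊆ s ∪ t) : u ∈ J :=
  hJ.mono _ (hJ.union_mem _ hs _ ht) _ hu

theorem setOf_le_mem_of_lt (hJ : IsIdealOn κ J)
    (hinc : ∀ α < δ, ∀ β < δ, α < β → ltMod κ J (f α) (f β)) {a b : Ordinal} (hb : b < δ)
    (hab : a < b) {Q : Ordinal → Prop} {g : Ordinal → Ordinal}
    (ha : {i | i < κ ∧ Q i ∧ f a i ≤ g i} ∈ J) : {i | i < κ ∧ Q i ∧ f b i ≤ g i} ∈ J := by
  refine hJ.mem_of_subset_union ha (hinc a (hab.trans hb) b hb hab) fun i ⟨hi, hQ, hle⟩ => ?_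
  by_cases hag : f a i ≤ g i
  exacts [Or.inl ⟨hi, hQ, hag⟩, Or.inr ⟨hi, hle.trans (not_le.1 hag).le⟩]

theorem IsEub.exists_setOf_le_mem (hJ : IsIdealOn κ J) (heub : IsEub κ J δ f h) (hδ : 0 < δ)
    {Q : Ordinal → Prop} {g : Ordinal → Ordinal} (hg : ∀ i < κ, Q i → g i < h i) :
    ∃ a < δ, {i | i < κ ∧ Q i ∧ f a i ≤ g i} ∈ J := by
  classical
  set g' : Ordinal → Ordinal := fun i => if Q i then g i else 0
  have hg' : ltMod κ J g' h := hJ.mono _ (heub.1 0 hδ) _ fun i ⟨hi, hle⟩ => by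
    by_cases hQ : Q i
    · exact absurd hle (by simpa only [g', if_pos hQ] using (hg i hi hQ).not_ge)
    · simp only [g', if_neg hQ, nonpos_iff_eq_zero] at hle
      exact ⟨hi, hle ▸ zero_le⟩
  obtain ⟨a, haδ, ha⟩ := heub.2 g' hg'
  refine ⟨a, haδ, hJ.mono _ ha _ fun i ⟨hi, hQ, hle⟩ => ⟨hi, ?_⟩⟩
  simpa only [g', if_pos hQ] using hle

theorem IsEub.setOf_cof_gt_mem (hJ : IsIdealOn κ J)
    (hinc : ∀ α < δ, ∀ β < δ, α < β → ltMod κ J (f α) (f β)) (heub : IsEub κ J δ f h)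
    (hδ : IsSuccLimit δ) : {i | i < κ ∧ δ.cof < (h i).cof} ∈ J := by
  obtain ⟨c, hcδ, -, hc⟩ := exists_monotoneOn_cofinal δ
  have hbound : ∀ i < κ, δ.cof < (h i).cof →
      ∃ b < h i, ∀ ν < δ.cof.ord, f (c ν) i < h i → f (c ν) i ≤ b := by
    intro i _ hi
    have hpos : 0 < h i := cof_pos.1 (zero_le.trans_lt hi)
    refine exists_forall_of_upwardClosed (by rwa [card_ord]) (fun ν _ => ?_)
      fun _ _ x y hxy _ hx hlt => (hx hlt).trans hxy
    by_cases hlt : f (c ν) i < h i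
    exacts [⟨_, hlt, fun _ => le_rfl⟩, ⟨0, hpos, fun h' => absurd h' hlt⟩]
  choose! g hg_lt hg using hbound
  obtain ⟨a, haδ, ha⟩ := heub.exists_setOf_le_mem hJ hδ.pos hg_lt
  obtain ⟨ν, hν, hle⟩ := hc (succ a) (hδ.succ_lt haδ)
  have hb : {i | i < κ ∧ δ.cof < (h i).cof ∧ f (c ν) i ≤ g i} ∈ J :=
    setOf_le_mem_of_lt hJ hinc (hcδ ν hν) ((lt_succ a).trans_le hle) ha
  refine hJ.mem_of_subset_union hb (heub.1 _ (hcδ ν hν)) fun i ⟨hi, hcof⟩ => ?_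
  by_cases hlt : f (c ν) i < h i
  exacts [Or.inl ⟨hi, hcof, hg i hi hcof ν hν hlt⟩, Or.inr ⟨hi, not_lt.1 hlt⟩]

theorem IsEub.setOf_cof_eq_mem (hJ : IsIdealOn κ J)
    (hinc : ∀ α < δ, ∀ β < δ, α < β → ltMod κ J (f α) (f β)) (heub : IsEub κ J δ f h)
    (hδ : IsSuccLimit δ) {χ : Cardinal} (hχ : χ.IsRegular) (hκχ : κ.card < χ)
    (hχδ : χ < δ.cof) : {i | i < κ ∧ (h i).cof = χ} ∈ J := by
  choose e he_lt he_mono he_cof using fun i => exists_monotoneOn_cofinal (h i)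
  have ha : ∀ ν < χ.ord, ∃ a < δ, {i | i < κ ∧ (h i).cof = χ ∧ f a i ≤ e i ν} ∈ J :=
    fun ν hν => heub.exists_setOf_le_mem hJ hδ.pos fun i _ hi => he_lt i ν (by rwa [hi])
  choose! a haδ ha using ha
  obtain ⟨b, hbδ, hab⟩ : ∃ b < δ, ∀ ν < χ.ord, a ν < b :=
    exists_forall_of_upwardClosed (by rwa [card_ord])
      (fun ν hν => ⟨_, hδ.succ_lt (haδ ν hν), lt_succ _⟩) fun _ _ _ _ hxy _ hx => hx.trans_le hxy
  obtain ⟨ν, hν, hle⟩ := exists_lt_ord_forall_le_of_cof_eq (by rwa [hχ.cof_ord]) he_mono he_cof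
    (g := f b)
  have hb : {i | i < κ ∧ (h i).cof = χ ∧ f b i ≤ e i ν} ∈ J :=
    setOf_le_mem_of_lt hJ hinc hbδ (hab ν hν) (ha ν hν)
  refine hJ.mem_of_subset_union (heub.1 b hbδ) hb fun i ⟨hi, hcof⟩ => ?_
  by_cases hlt : f b i < h i
  exacts [Or.inr ⟨hi, hcof, hle i hi hcof hlt⟩, Or.inl ⟨hi, not_lt.1 hlt⟩]

theorem isGoodPt_of_strictMono {σ : Ordinal} {α : Ordinal → Ordinal} (hα : StrictMono α)
    (hαδ : ∀ ε < σ, α ε < δ) (hcof : ∀ β < δ, ∃ ε < σ, β < α ε)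
    {t : Ordinal → Set Ordinal} (ht : ∀ ε < σ, t ε ∈ J)
    (hft : ∀ i < κ, ∀ ε' ε, ε' < ε → ε < σ → i ∉ t ε' → i ∉ t ε → f (α ε') i < f (α ε) i) :
    IsGoodPt κ J f δ := by
  classical
  have hinv : ∀ ε, Function.invFun α (α ε) = ε := Function.leftInverse_invFun hα.injective
  refine ⟨α '' Iio σ, ?_, fun β hβ => ?_, t ∘ Function.invFun α, ?_, ?_⟩
  · rintro _ ⟨ε, hε, rfl⟩
    exact hαδ ε hε
  · obtain ⟨ε, hε, hlt⟩ := hcof β hβ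
    exact ⟨α ε, ⟨ε, hε, rfl⟩, hlt⟩
  · rintro _ ⟨ε, hε, rfl⟩
    simpa only [Function.comp_apply, hinv] using ht ε hε
  · rintro i hi _ ⟨ε', -, rfl⟩ _ ⟨ε, hε, rfl⟩ hlt
    simp only [Function.comp_apply, hinv]
    exact hft i hi ε' ε (hα.lt_iff_lt.1 hlt) hε

theorem IsEub.isGoodPt_of_cof_eq (hJ : IsIdealOn κ J)
    (hinc : ∀ α < δ, ∀ β < δ, α < β → ltMod κ J (f α) (f β)) (heub : IsEub κ J δ f h)
    (hδ : IsSuccLimit δ) (hκ : κ.card < δ.cof)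
    (hcof : {i | i < κ ∧ (h i).cof ≠ δ.cof} ∈ J) : IsGoodPt κ J f δ := by
  choose e he_lt he_mono he_cof using fun i => exists_monotoneOn_cofinal (h i)
  have ha : ∀ ν < δ.cof.ord, ∃ a < δ, {i | i < κ ∧ (h i).cof = δ.cof ∧ f a i ≤ e i ν} ∈ J :=
    fun ν hν => heub.exists_setOf_le_mem hJ hδ.pos fun i _ hi => he_lt i ν (by rwa [hi])
  choose! a haδ ha using ha
  have hν : ∀ x < δ, ∃ ν < δ.cof.ord,
      ∀ i < κ, (h i).cof = δ.cof → f x i < h i → f x i ≤ e i ν := fun x _ =>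
    exists_lt_ord_forall_le_of_cof_eq (by rwa [Ordinal.cof_ord_cof]) he_mono he_cof
  choose! ν hνσ hν using hν
  obtain ⟨α, M, hα, hαcof, hαM, haM, hνM⟩ :=
    exists_strictMono_cofinal_interleaving hδ a ν haδ hνσ
  -- off `t ε`, the value `f (α ε) i` lies strictly between `e i (M ε)` and `h i`
  refine isGoodPt_of_strictMono hα (fun ε hε => (hαM ε hε).1) hαcof
    (t := fun ε => {i | i < κ ∧ (h i).cof ≠ δ.cof} ∪ {i | i < κ ∧ h i ≤ f (α ε) i} ∪
      {i | i < κ ∧ (h i).cof = δ.cof ∧ f (α ε) i ≤ e i (M ε)}) (fun ε hε => ?_) ?_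
  · obtain ⟨hαδ, hMσ⟩ := hαM ε hε
    exact hJ.union_mem _ (hJ.union_mem _ hcof _ (heub.1 _ hαδ)) _
      (setOf_le_mem_of_lt hJ hinc hαδ (haM ε) (ha _ hMσ))
  · intro i hi ε' ε hlt hε hit' hit
    have hQ : (h i).cof = δ.cof := not_not.1 fun hne => hit (Or.inl (Or.inl ⟨hi, hne⟩))
    have hlt' : f (α ε') i < h i := not_le.1 fun hle => hit' (Or.inl (Or.inr ⟨hi, hle⟩))
    have hgt : e i (M ε) < f (α ε) i := not_le.1 fun hle => hit (Or.inr ⟨hi, hQ, hle⟩)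
    have hαδ' : α ε' < δ := (hαM ε' (hlt.trans hε)).1
    have hdom : ∀ {ν}, ν < δ.cof.ord → ν ∈ Iio (h i).cof.ord := by rw [hQ]; exact id
    calc f (α ε') i ≤ e i (ν (α ε')) := hν _ hαδ' i hi hQ hlt'
      _ ≤ e i (M ε) := he_mono i (hdom (hνσ _ hαδ')) (hdom (hαM ε hε).2) (hνM ε' ε hlt)
      _ < f (α ε) i := hgt

theorem IsEub.setOf_cof_mem_Ioo_mem (hJ : IsIdealOn κ J)
    (hinc : ∀ α < δ, ∀ β < δ, α < β → ltMod κ J (f α) (f β)) (heub : IsEub κ J δ f h)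
    (hδ : IsSuccLimit δ) (hκ : 1 ≤ κ.card) {θ : Cardinal} (hcomp : IsCompleteIdeal θ J)
    (hθ : #(Ioo κ.card δ.cof) < Cardinal.lift.{1} θ) :
    {i | i < κ ∧ (h i).cof ∈ Ioo κ.card δ.cof} ∈ J := by
  refine hJ.mono _ (hcomp ((fun χ => {i | i < κ ∧ (h i).cof = χ}) ''
    {χ | χ ∈ Ioo κ.card δ.cof ∧ χ.IsRegular}) ?_ ?_) _ ?_
  · rintro _ ⟨χ, ⟨⟨hκχ, hχδ⟩, hχ⟩, rfl⟩
    exact heub.setOf_cof_eq_mem hJ hinc hδ hχ hκχ hχδ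
  · exact mk_image_le.trans_lt ((mk_le_mk_of_subset fun χ hχ => hχ.1).trans_lt hθ)
  · rintro i ⟨hi, hcof⟩
    have hreg : (h i).cof.IsRegular := isRegular_cof (one_lt_cof_iff.1 (hκ.trans_lt hcof.1))
    exact ⟨_, ⟨(h i).cof, ⟨hcof, hreg⟩, rfl⟩, hi, rfl⟩

theorem IsEub.setOf_cof_ne_mem (hJ : IsIdealOn κ J)
    (hinc : ∀ α < δ, ∀ β < δ, α < β → ltMod κ J (f α) (f β)) (heub : IsEub κ J δ f h)
    (hδ : IsSuccLimit δ) (hκ : 1 ≤ κ.card) {θ : Cardinal} (hcomp : IsCompleteIdeal θ J)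
    (hθ : #(Ioo κ.card δ.cof) < Cardinal.lift.{1} θ)
    (hsmall : {i | i < κ ∧ (h i).cof ≤ κ.card} ∈ J) :
    {i | i < κ ∧ (h i).cof ≠ δ.cof} ∈ J := by
  refine hJ.mem_of_subset_union
    (hJ.union_mem _ hsmall _ (heub.setOf_cof_mem_Ioo_mem hJ hinc hδ hκ hcomp hθ))
    (heub.setOf_cof_gt_mem hJ hinc hδ) fun i ⟨hi, hne⟩ => ?_
  rcases le_or_gt (h i).cof κ.card with hle | hgt
  · exact Or.inl (Or.inl ⟨hi, hle⟩)
  rcases hne.lt_or_gt with hlt | hgt'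
  exacts [Or.inl (Or.inr ⟨hi, hgt, hlt⟩), Or.inr ⟨hi, hgt'⟩]

end Eub

theorem statement9_general
    (κ lam μ : Cardinal.{0}) (hκ : κ.IsRegular)
    (hμ : μ = Order.succ lam)
    (J : Set (Set Ordinal.{0})) (hJ : IsIdealOn κ.ord J)
    (f : Ordinal.{0} → Ordinal.{0} → Ordinal.{0})
    (hinc : ∀ α < μ.ord, ∀ β < μ.ord, α < β → ltMod κ.ord J (f α) (f β))
    (θ : Cardinal.{0}) (hcomp : IsCompleteIdeal θ J)
    (ζ : Ordinal.{0}) (hζθ : ζ ≤ θ.ord)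
    (hlamval : lam = succIter κ ζ) :
    Sbd κ lam J f = ∅ := by
  subst hμ
  refine eq_empty_of_forall_notMem fun δ ⟨hδμ, hδ, hκδ, hδlam, ⟨h, heub, hsmall⟩, hgood⟩ => ?_
  have hincδ : ∀ α < δ, ∀ β < δ, α < β → ltMod κ.ord J (f α) (f β) :=
    fun α hα β hβ => hinc α (hα.trans hδμ) β (hβ.trans hδμ)
  have hθ : #(Ioo κ.ord.card δ.cof) < Cardinal.lift.{1} θ := by
    rw [card_ord]
    exact (mk_le_mk_of_subset Ioo_subset_Ico_self).trans_lt
      (mk_Ico_lt_of_lt_succIter hκδ.le (hlamval ▸ hδlam) hζθ)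
  have hκ1 : 1 ≤ κ.ord.card := by rw [card_ord]; exact Cardinal.one_le_iff_pos.2 hκ.pos
  exact hgood (heub.isGoodPt_of_cof_eq hJ hincδ hδ (by rwa [card_ord]) <|
    heub.setOf_cof_ne_mem hJ hincδ hδ hκ1 hcomp hθ (by rwa [card_ord]))

/-- Claim 1.9(3): if `J` is `θ`-complete, `ζ ≤ θ` is a limit ordinal and `λ = κ^{+ζ}`,
then there are no bad points. -/
theorem statement9
    (κ lam μ : Cardinal.{0}) (hκ : κ.IsRegular) (hκlam : κ < lam)
    (hcfl : lam.ord.cof = κ) (hμ : μ = Order.succ lam)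
    (J : Set (Set Ordinal.{0})) (hJ : IsIdealOn κ.ord J) (hJbd : boundedIdeal κ.ord ⊆ J)
    (lamSeq : Ordinal.{0} → Cardinal.{0})
    (hreg : ∀ i < κ.ord, (lamSeq i).IsRegular)
    (hgtκ : ∀ i < κ.ord, Order.succ κ < lamSeq i)
    (hmono : ∀ i < κ.ord, ∀ j < κ.ord, i < j → lamSeq i < lamSeq j)
    (hbelow : ∀ i < κ.ord, lamSeq i < lam)
    (hsupl : ∀ c < lam, ∃ i < κ.ord, c < lamSeq i)
    (f : Ordinal.{0} → Ordinal.{0} → Ordinal.{0})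
    (hf : ∀ α < μ.ord, ∀ i < κ.ord, f α i < (lamSeq i).ord)
    (hinc : ∀ α < μ.ord, ∀ β < μ.ord, α < β → ltMod κ.ord J (f α) (f β))
    (hcofinal : ∀ g : Ordinal.{0} → Ordinal.{0}, (∀ i < κ.ord, g i < (lamSeq i).ord) →
      ∃ α < μ.ord, ltMod κ.ord J g (f α))
    (θ : Cardinal.{0}) (hcomp : IsCompleteIdeal θ J)
    (ζ : Ordinal.{0}) (hζ : Order.IsSuccLimit ζ) (hζθ : ζ ≤ θ.ord)
    (hlamval : lam = succIter κ ζ) :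
    Sbd κ lam J f = ∅ :=
  statement9_general κ lam μ hκ hμ J hJ f hinc θ hcomp ζ hζθ hlamval
end

section
/- In the scale context, for every regular cardinal χ with κ < χ < λ, the set S^gd_χ = {δ < μ : δ ∈ S^gd and cf(δ) = χ} is stationary in μ. -/
open Cardinal Set

/-!
Build, by recursion of length `χ`, a strictly increasing sequence `e` of points of a given club
of `μ` such that `f (e ξ)` lies `J`-almost everywhere above the pointwise supremum of the
`f (e η)`, `η < ξ`. This is possible because for fewer than `λ` indices that supremum lies in
`∏ λ_i` on a final segment of `κ`, so the scale dominates it, and `μ` is regular. The supremum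
`δ` of the sequence is in the club and has cofinality `χ`; removing from each index the null set
where domination fails exhibits `δ` as a good point.
-/

namespace Ordinal

theorem iSup_Iio_lt_of_card_lt_cof {ξ a : Ordinal.{u}} {g : Iio ξ → Ordinal.{u}}
    (hξ : ξ.card < a.cof) (hg : ∀ η, g η < a) : ⨆ η, g η < a := by
  apply lift_iSup_lt_of_lt_cof _ hg
  rwa [Cardinal.mk_Iio_ordinal, Cardinal.lift_lift, ← lift_cof, Cardinal.lift_lt]

theorem lt_iSup_Iio_of_strictMonoOn {θ : Ordinal.{u}} {e : Ordinal.{u} → Ordinal.{u}}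
    (hθ : Order.IsSuccPrelimit θ) (he : StrictMonoOn e (Iio θ)) {ξ : Ordinal} (hξ : ξ < θ) :
    e ξ < ⨆ η : Iio θ, e η :=
  (lt_iSup_add_one (fun η : Iio θ => e η) ⟨ξ, hξ⟩).trans_eq
    (iSup_Iio_add_one he.strictMono hθ)

theorem exists_seq_of_step {θ : Ordinal.{u}} (P : Ordinal.{u} → Prop)
    (Q : (ξ : Ordinal.{u}) → (Iio ξ → Ordinal.{u}) → Ordinal.{u} → Prop)
    (step : ∀ ξ < θ, ∀ g : Iio ξ → Ordinal, (∀ η, P (g η)) → ∃ β, P β ∧ Q ξ g β) :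
    ∃ e : Ordinal → Ordinal, ∀ ξ < θ, P (e ξ) ∧ Q ξ (fun η => e η) (e ξ) := by
  classical
  have step' : ∀ ξ (g : Iio ξ → Ordinal), ∃ β, ξ < θ → (∀ η, P (g η)) → P β ∧ Q ξ g β := by
    intro ξ g
    by_cases h : ξ < θ ∧ ∀ η, P (g η)
    · obtain ⟨β, hβ⟩ := step ξ h.1 g h.2
      exact ⟨β, fun _ _ => hβ⟩
    · exact ⟨0, fun hξ hg => absurd ⟨hξ, hg⟩ h⟩
  let e : Ordinal → Ordinal :=
    wellFounded_lt.fix fun ξ ih => Classical.choose (step' ξ fun η => ih η.1 η.2)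
  have he : ∀ ξ, ξ < θ → (∀ η : Iio ξ, P (e η)) → P (e ξ) ∧ Q ξ (fun η => e η) (e ξ) := by
    intro ξ
    rw [show e ξ = _ from wellFounded_lt.fix_eq _ ξ]
    exact Classical.choose_spec (step' ξ fun η => e η)
  refine ⟨e, fun ξ hξ => he ξ hξ fun η => ?_⟩
  induction ξ using WellFoundedLT.induction with
  | ind ξ ih => exact (he η (η.2.trans hξ) fun ζ => ih η η.2 (η.2.trans hξ) ζ).1

end Ordinal

theorem ltMod_trans {κ : Ordinal} {J : Set (Set Ordinal)} (hJ : IsIdealOn κ J)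
    {f g h : Ordinal → Ordinal} (hfg : ltMod κ J f g) (hgh : ltMod κ J g h) : ltMod κ J f h := by
  refine hJ.mono _ (hJ.union_mem _ hfg _ hgh) _ fun i ⟨hi, hhf⟩ => ?_
  by_cases hgf : g i ≤ f i
  · exact Or.inl ⟨hi, hgf⟩
  · exact Or.inr ⟨hi, hhf.trans (not_le.1 hgf).le⟩

theorem ltMod_of_eqOn_compl {κ : Ordinal} {J : Set (Set Ordinal)} (hJ : IsIdealOn κ J)
    {s : Set Ordinal} (hs : s ∈ J) {g g' h : Ordinal → Ordinal}
    (hgg' : ∀ i < κ, i ∉ s → g i = g' i) (hlt : ltMod κ J g' h) : ltMod κ J g h := by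
  refine hJ.mono _ (hJ.union_mem _ hlt _ hs) _ fun i ⟨hi, hhg⟩ => ?_
  by_cases his : i ∈ s
  · exact Or.inr his
  · exact Or.inl ⟨hi, hgg' i hi his ▸ hhg⟩

theorem isGoodPt_iSup_Iio {κ : Ordinal.{0}} {J : Set (Set Ordinal)}
    {f : Ordinal.{0} → Ordinal.{0} → Ordinal.{0}} {θ : Ordinal.{0}} {e : Ordinal → Ordinal}
    (hθ : Order.IsSuccPrelimit θ) (he : StrictMonoOn e (Iio θ))
    (hdom : ∀ ξ < θ, ltMod κ J (fun i => ⨆ η : Iio ξ, f (e η) i) (f (e ξ))) :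
    IsGoodPt κ J f (⨆ ξ : Iio θ, e ξ) := by
  have hinv : ∀ ξ < θ, Function.invFunOn e (Iio θ) (e ξ) = ξ := fun ξ hξ =>
    he.injOn.leftInvOn_invFunOn hξ
  refine ⟨e '' Iio θ, ?_, ?_,
    fun x => {i | i < κ ∧ f x i ≤ ⨆ η : Iio (Function.invFunOn e (Iio θ) x), f (e η) i},
    ?_, ?_⟩
  · rintro _ ⟨ξ, hξ, rfl⟩
    exact Ordinal.lt_iSup_Iio_of_strictMonoOn hθ he hξ
  · intro β hβ
    obtain ⟨ξ, hξ⟩ := Ordinal.lt_iSup_iff.1 hβ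
    exact ⟨e ξ, mem_image_of_mem e ξ.2, hξ⟩
  · rintro _ ⟨ξ, hξ, rfl⟩
    dsimp only
    rw [hinv ξ hξ]
    exact hdom ξ hξ
  · rintro i hi _ ⟨η, hη, rfl⟩ _ ⟨ξ, hξ, rfl⟩ hlt - hnull
    dsimp only at hnull
    rw [hinv ξ hξ] at hnull
    simp only [mem_ofPred_eq, not_and, not_le] at hnull
    calc f (e η) i ≤ ⨆ ζ : Iio ξ, f (e ζ) i :=
          Ordinal.le_iSup (fun ζ : Iio ξ => f (e ζ) i) ⟨η, (he.lt_iff_lt hη hξ).1 hlt⟩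
      _ < f (e ξ) i := hnull hi

theorem IsClubIn.iSup_Iio_mem {C : Set Ordinal} {δ θ : Ordinal.{0}} (hC : IsClubIn C δ)
    (hθ : Order.IsSuccLimit θ) {e : Ordinal → Ordinal} (he : StrictMonoOn e (Iio θ))
    (heC : ∀ ξ < θ, e ξ ∈ C) (hlt : ⨆ ξ : Iio θ, e ξ < δ) : ⨆ ξ : Iio θ, e ξ ∈ C := by
  have hlt_sup : ∀ ξ < θ, e ξ < ⨆ η : Iio θ, e η := fun _ =>
    Ordinal.lt_iSup_Iio_of_strictMonoOn hθ.isSuccPrelimit he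
  refine hC.2.2 _ hlt (zero_le.trans_lt (hlt_sup 0 hθ.bot_lt)) fun β hβ => ?_
  obtain ⟨ξ, hξ⟩ := Ordinal.lt_iSup_iff.1 hβ
  exact ⟨e ξ, heC ξ ξ.2, hξ, hlt_sup ξ ξ.2⟩

section Scale

variable {κ lam μ : Cardinal.{0}} {J : Set (Set Ordinal.{0})} {lamSeq : Ordinal.{0} → Cardinal.{0}}
  {f : Ordinal.{0} → Ordinal.{0} → Ordinal.{0}}

theorem ltMod_apply_mono (hJ : IsIdealOn κ.ord J)
    (hinc : ∀ α < μ.ord, ∀ β < μ.ord, α < β → ltMod κ.ord J (f α) (f β))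
    {g : Ordinal → Ordinal} {α β : Ordinal} (hα : α < μ.ord) (hβ : β < μ.ord) (hαβ : α ≤ β)
    (hg : ltMod κ.ord J g (f α)) : ltMod κ.ord J g (f β) := by
  rcases hαβ.eq_or_lt with rfl | hlt
  · exact hg
  · exact ltMod_trans hJ hg (hinc α hα β hβ hlt)

theorem exists_ltMod_iSup_Iio (hJ : IsIdealOn κ.ord J) (hJbd : boundedIdeal κ.ord ⊆ J)
    (hreg : ∀ i < κ.ord, (lamSeq i).IsRegular)
    (hmono : ∀ i < κ.ord, ∀ j < κ.ord, i < j → lamSeq i < lamSeq j)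
    (hsupl : ∀ c < lam, ∃ i < κ.ord, c < lamSeq i)
    (hf : ∀ α < μ.ord, ∀ i < κ.ord, f α i < (lamSeq i).ord)
    (hcofinal : ∀ g : Ordinal → Ordinal, (∀ i < κ.ord, g i < (lamSeq i).ord) →
      ∃ α < μ.ord, ltMod κ.ord J g (f α))
    {ξ : Ordinal} (hξ : ξ.card < lam) (a : Iio ξ → Ordinal) (ha : ∀ η, a η < μ.ord) :
    ∃ α < μ.ord, ltMod κ.ord J (fun i => ⨆ η, f (a η) i) (f α) := by
  classical
  obtain ⟨i₀, hi₀, hξi₀⟩ := hsupl _ hξ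
  -- cut off below `i₀`, where the supremum may reach `λ_i`
  let H : Ordinal → Ordinal := fun i => if i₀ ≤ i then ⨆ η, f (a η) i else 0
  have hH : ∀ i < κ.ord, H i < (lamSeq i).ord := by
    intro i hi
    by_cases hi₀i : i₀ ≤ i
    · simp only [H, if_pos hi₀i]
      refine Ordinal.iSup_Iio_lt_of_card_lt_cof ?_ fun η => hf _ (ha η) i hi
      rw [(hreg i hi).cof_ord]
      rcases hi₀i.eq_or_lt with rfl | hlt
      · exact hξi₀
      · exact hξi₀.trans (hmono _ hi₀ _ hi hlt)
    · simpa only [H, if_neg hi₀i] using ord_pos.2 (hreg i hi).pos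
  obtain ⟨α, hα, hHα⟩ := hcofinal H hH
  exact ⟨α, hα, ltMod_of_eqOn_compl hJ (hJbd ⟨i₀, hi₀, subset_rfl⟩)
    (fun i _ hi => (if_pos (not_lt.1 hi)).symm) hHα⟩

theorem exists_strictMonoOn_club_ltMod_iSup (hJ : IsIdealOn κ.ord J)
    (hJbd : boundedIdeal κ.ord ⊆ J) (hreg : ∀ i < κ.ord, (lamSeq i).IsRegular)
    (hmono : ∀ i < κ.ord, ∀ j < κ.ord, i < j → lamSeq i < lamSeq j)
    (hsupl : ∀ c < lam, ∃ i < κ.ord, c < lamSeq i)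
    (hf : ∀ α < μ.ord, ∀ i < κ.ord, f α i < (lamSeq i).ord)
    (hinc : ∀ α < μ.ord, ∀ β < μ.ord, α < β → ltMod κ.ord J (f α) (f β))
    (hcofinal : ∀ g : Ordinal → Ordinal, (∀ i < κ.ord, g i < (lamSeq i).ord) →
      ∃ α < μ.ord, ltMod κ.ord J g (f α))
    (hμ : μ.IsRegular) (hlamμ : lam < μ) {C : Set Ordinal} (hC : IsClubIn C μ.ord)
    {θ : Ordinal} (hθ : θ ≤ lam.ord) :
    ∃ e : Ordinal → Ordinal, StrictMonoOn e (Iio θ) ∧ (∀ ξ < θ, e ξ ∈ C) ∧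
      ∀ ξ < θ, ltMod κ.ord J (fun i => ⨆ η : Iio ξ, f (e η) i) (f (e ξ)) := by
  obtain ⟨e, he⟩ := Ordinal.exists_seq_of_step (θ := θ) (· ∈ C)
    (fun ξ g β => (∀ η, g η < β) ∧ ltMod κ.ord J (fun i => ⨆ η, f (g η) i) (f β)) <| by
      intro ξ hξ g hgC
      have hξlam : ξ.card < lam := lt_ord.1 (hξ.trans_le hθ)
      have hgμ : ∀ η, g η < μ.ord := fun η => hC.1 (hgC η)
      obtain ⟨α, hα, hgα⟩ :=
        exists_ltMod_iSup_Iio hJ hJbd hreg hmono hsupl hf hcofinal hξlam g hgμ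
      have hsup : ⨆ η, g η < μ.ord := Ordinal.iSup_Iio_lt_of_card_lt_cof
        (by rw [hμ.cof_ord]; exact hξlam.trans hlamμ) hgμ
      obtain ⟨β, hβC, hβ⟩ := hC.2.1 _ (max_lt hsup hα)
      refine ⟨β, hβC, fun η => (Ordinal.le_iSup g η).trans_lt ((le_max_left _ _).trans_lt hβ),
        ltMod_apply_mono hJ hinc hα (hC.1 hβC) ((le_max_right _ _).trans hβ.le) hgα⟩
  exact ⟨e, fun η hη ξ hξ hlt => (he ξ hξ).2.1 ⟨η, hlt⟩, fun ξ hξ => (he ξ hξ).1,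
    fun ξ hξ => (he ξ hξ).2.2⟩

end Scale

theorem statement12_general
    (κ lam μ : Cardinal.{0}) (hκ : κ.IsRegular) (hκlam : κ < lam)
    (hμ : μ = Order.succ lam)
    (J : Set (Set Ordinal.{0})) (hJ : IsIdealOn κ.ord J) (hJbd : boundedIdeal κ.ord ⊆ J)
    (lamSeq : Ordinal.{0} → Cardinal.{0})
    (hreg : ∀ i < κ.ord, (lamSeq i).IsRegular)
    (hmono : ∀ i < κ.ord, ∀ j < κ.ord, i < j → lamSeq i < lamSeq j)
    (hsupl : ∀ c < lam, ∃ i < κ.ord, c < lamSeq i)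
    (f : Ordinal.{0} → Ordinal.{0} → Ordinal.{0})
    (hf : ∀ α < μ.ord, ∀ i < κ.ord, f α i < (lamSeq i).ord)
    (hinc : ∀ α < μ.ord, ∀ β < μ.ord, α < β → ltMod κ.ord J (f α) (f β))
    (hcofinal : ∀ g : Ordinal.{0} → Ordinal.{0}, (∀ i < κ.ord, g i < (lamSeq i).ord) →
      ∃ α < μ.ord, ltMod κ.ord J g (f α))
    (χ : Cardinal.{0}) (hχ : χ.IsRegular) (h1 : κ < χ) (h2 : χ < lam) :
    IsStationaryIn {δ | δ ∈ Sgd κ lam J f ∧ δ.cof = χ} μ.ord := by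
  intro C hC
  have hμreg : μ.IsRegular := hμ ▸ isRegular_succ (hκ.aleph0_le.trans hκlam.le)
  have hlamμ : lam < μ := hμ ▸ Order.lt_succ lam
  obtain ⟨e, he, heC, hdom⟩ := exists_strictMonoOn_club_ltMod_iSup hJ hJbd hreg hmono hsupl hf
    hinc hcofinal hμreg hlamμ hC (ord_le_ord.2 h2.le)
  have hχlim : Order.IsSuccLimit χ.ord := isSuccLimit_ord hχ.aleph0_le
  have hcof : (⨆ ξ : Iio χ.ord, e ξ).cof = χ :=
    (Ordinal.cof_iSup_Iio he.strictMono hχlim.isSuccPrelimit).trans hχ.cof_ord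
  have hδμ : ⨆ ξ : Iio χ.ord, e ξ < μ.ord := Ordinal.iSup_Iio_lt_of_card_lt_cof
    (by rw [card_ord, hμreg.cof_ord]; exact h2.trans hlamμ) fun ξ => hC.1 (heC ξ ξ.2)
  have hδlim : Order.IsSuccLimit (⨆ ξ : Iio χ.ord, e ξ) :=
    Ordinal.one_lt_cof_iff.1 ((one_lt_aleph0.trans_le hχ.aleph0_le).trans_eq hcof.symm)
  refine ⟨_, ⟨⟨hμ ▸ hδμ, hδlim, h1.trans_eq hcof.symm, hcof.trans_lt h2,
    isGoodPt_iSup_Iio hχlim.isSuccPrelimit he hdom⟩, hcof⟩, hC.iSup_Iio_mem hχlim he heC hδμ⟩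

/-- Claim 1.12: for every regular `χ` with `κ < χ < λ`, the set of good points of
cofinality `χ` is stationary in `μ = λ⁺`. -/
theorem statement12
    (κ lam μ : Cardinal.{0}) (hκ : κ.IsRegular) (hκlam : κ < lam)
    (hcfl : lam.ord.cof = κ) (hμ : μ = Order.succ lam)
    (J : Set (Set Ordinal.{0})) (hJ : IsIdealOn κ.ord J) (hJbd : boundedIdeal κ.ord ⊆ J)
    (lamSeq : Ordinal.{0} → Cardinal.{0})
    (hreg : ∀ i < κ.ord, (lamSeq i).IsRegular)
    (hgtκ : ∀ i < κ.ord, Order.succ κ < lamSeq i)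
    (hmono : ∀ i < κ.ord, ∀ j < κ.ord, i < j → lamSeq i < lamSeq j)
    (hbelow : ∀ i < κ.ord, lamSeq i < lam)
    (hsupl : ∀ c < lam, ∃ i < κ.ord, c < lamSeq i)
    (f : Ordinal.{0} → Ordinal.{0} → Ordinal.{0})
    (hf : ∀ α < μ.ord, ∀ i < κ.ord, f α i < (lamSeq i).ord)
    (hinc : ∀ α < μ.ord, ∀ β < μ.ord, α < β → ltMod κ.ord J (f α) (f β))
    (hcofinal : ∀ g : Ordinal.{0} → Ordinal.{0}, (∀ i < κ.ord, g i < (lamSeq i).ord) →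
      ∃ α < μ.ord, ltMod κ.ord J g (f α))
    (χ : Cardinal.{0}) (hχ : χ.IsRegular) (h1 : κ < χ) (h2 : χ < lam) :
    IsStationaryIn {δ | δ ∈ Sgd κ lam J f ∧ δ.cof = χ} μ.ord :=
  statement12_general κ lam μ hκ hκlam hμ J hJ hJbd lamSeq hreg hmono hsupl f hf hinc hcofinal χ hχ
    h1 h2
end
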